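/- arXiv:2001.03598 — 2 statements merged into one kernel-verified Lean document; each statement's English description precedes it below -/
import Mathlib

section
/- Pliam's inequality with classical side information: for jointly distributed random variables (X,Y) with X on a finite alphabet \mathcal{X} and Y on a countable alphabet, \frac{|\mathcal{X}|+1}{2} - G(X|Y) \leq \frac{|\mathcal{X}|}{2} \|p_{XY} - u_X \otimes p_Y\|_1, where u_X is the uniform distribution on \mathcal{X}. -/
/-!
For one value of `y`, let `q = p(·, y)` have mass `s`. For every guessing order `σ` and every
constant `c`, `(|X|+1)/2 · s − ∑ₖ (k+1) q(σ k) = ∑ₖ ((|X|+1)/2 − (k+1)) (q(σ k) − c)`, because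
the centred weights `(|X|+1)/2 − (k+1)` sum to zero, and each of them is at most `|X|/2` in
absolute value. Taking `c = s/|X|` and summing over `y` gives the inequality; every series
involved converges because `p` is absolutely summable.
-/

open Finset Fintype

theorem sum_fin_cast_add_one (n : ℕ) :
    ∑ k : Fin n, (((k : ℕ) : ℝ) + 1) = (n : ℝ) * (n + 1) / 2 := by
  induction n with
  | zero => simp
  | succ m ih =>
    rw [Fin.sum_univ_castSucc]
    simp only [Fin.val_castSucc, Fin.val_last, ih]
    push_cast; ring

theorem abs_cast_add_one_sub_half_le {n : ℕ} (k : Fin n) :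
    |((n : ℝ) + 1) / 2 - (((k : ℕ) : ℝ) + 1)| ≤ (n : ℝ) / 2 := by
  have hk : ((k : ℕ) : ℝ) + 1 ≤ n := by exact_mod_cast k.isLt
  rw [abs_le]
  constructor <;> linarith [(Nat.cast_nonneg k : (0 : ℝ) ≤ k)]

-- Guesses are numbered from `1`, while `Fin n` starts at `0`.
def guessCost {X : Type*} {n : ℕ} (σ : Fin n ≃ X) (q : X → ℝ) : ℝ :=
  ∑ k : Fin n, (((k : ℕ) : ℝ) + 1) * q (σ k)

theorem half_succ_mul_sum_sub_guessCost_le {X : Type*} [Fintype X] {n : ℕ} (σ : Fin n ≃ X)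
    (q : X → ℝ) (c : ℝ) :
    ((n : ℝ) + 1) / 2 * ∑ x, q x - guessCost σ q ≤ (n : ℝ) / 2 * ∑ x, |q x - c| := by
  have hcentre : ((n : ℝ) + 1) / 2 * ∑ x, q x - guessCost σ q
      = ∑ k : Fin n, (((n : ℝ) + 1) / 2 - (((k : ℕ) : ℝ) + 1)) * (q (σ k) - c) := by
    simp only [guessCost, mul_sub, sub_mul, sum_sub_distrib, ← sum_mul, ← mul_sum,
      Equiv.sum_comp σ q, sum_const, card_univ, Fintype.card_fin, nsmul_eq_mul,
      sum_fin_cast_add_one]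
    ring
  rw [hcentre, ← Equiv.sum_comp σ, mul_sum]
  refine sum_le_sum fun k _ => ?_
  calc _ ≤ |((n : ℝ) + 1) / 2 - (((k : ℕ) : ℝ) + 1)| * |q (σ k) - c| := by
        rw [← abs_mul]; exact le_abs_self _
    _ ≤ (n : ℝ) / 2 * |q (σ k) - c| := by
        gcongr; exact abs_cast_add_one_sub_half_le k

theorem HasSum.sum_fst_of_fintype {α X Y : Type*} [AddCommMonoid α] [TopologicalSpace α]
    [ContinuousAdd α] [RegularSpace α] [Fintype X] {f : X × Y → α} {a : α} (h : HasSum f a) :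
    HasSum (fun y => ∑ x, f (x, y)) a :=
  ((Equiv.prodComm Y X).hasSum_iff.mpr h).prod_fiberwise fun _ => hasSum_fintype _

theorem summable_abs_sub_snd {X Y : Type*} [Finite X] {f : X × Y → ℝ} {g : Y → ℝ}
    (hf : Summable f) (hg : Summable g) : Summable fun xy => |f xy - g xy.2| :=
  (summable_prod_of_nonneg fun _ => abs_nonneg _).2
    ⟨fun x => ((hf.prod_factor x).sub hg).abs, .of_finite⟩

noncomputable def guesswork {X : Type*} [Fintype X] (q : X → ℝ) : ℝ :=
  ⨅ σ : Fin (card X) ≃ X, guessCost σ q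

section Guesswork

variable {X : Type*} [Fintype X]

theorem le_guesswork (q : X → ℝ) (c : ℝ) :
    ((card X : ℝ) + 1) / 2 * ∑ x, q x - (card X : ℝ) / 2 * ∑ x, |q x - c| ≤ guesswork q :=
  have : Nonempty (Fin (card X) ≃ X) := ⟨(equivFin X).symm⟩
  le_ciInf fun σ => by linarith [half_succ_mul_sum_sub_guessCost_le σ q c]

theorem abs_guesswork_le (q : X → ℝ) : |guesswork q| ≤ card X * ∑ x, |q x| := by
  have : Nonempty (Fin (card X) ≃ X) := ⟨(equivFin X).symm⟩
  obtain ⟨σ, hσ⟩ := exists_eq_ciInf_of_finite (f := fun σ : Fin (card X) ≃ X => guessCost σ q)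
  rw [guesswork, ← hσ, guessCost, ← Equiv.sum_comp σ, mul_sum]
  refine (abs_sum_le_sum_abs _ _).trans (sum_le_sum fun k _ => ?_)
  rw [abs_mul, abs_of_nonneg (by positivity)]
  gcongr
  exact_mod_cast k.isLt

theorem summable_guesswork {Y : Type*} {p : X → Y → ℝ}
    (hp : Summable fun xy : X × Y => p xy.1 xy.2) : Summable fun y => guesswork (p · y) :=
  .of_norm_bounded (hp.abs.hasSum.sum_fst_of_fintype.summable.mul_left (card X : ℝ))
    fun _ => abs_guesswork_le _

end Guesswork

open Fintype in
theorem pliam_inequality_side_information_general {X Y : Type*} [Fintype X]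
    (p : X → Y → ℝ)
    (hp1 : HasSum (fun xy : X × Y => p xy.1 xy.2) 1) :
    ((card X : ℝ) + 1) / 2 -
        (∑' y : Y, ⨅ σ : Fin (card X) ≃ X,
          ∑ k : Fin (card X), (((k : ℕ) : ℝ) + 1) * p (σ k) y) ≤
      ((card X : ℝ) / 2) *
        ∑' xy : X × Y, |p xy.1 xy.2 - (∑ x' : X, p x' xy.2) / (card X : ℝ)| := by
  have hmarginal : HasSum (fun y => ∑ x, p x y) 1 := hp1.sum_fst_of_fintype
  have hdist : Summable fun xy : X × Y => |p xy.1 xy.2 - (∑ x', p x' xy.2) / (card X : ℝ)| :=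
    summable_abs_sub_snd hp1.summable (g := fun y => (∑ x', p x' y) / card X)
      (hmarginal.summable.div_const _)
  have hlower : HasSum (fun y => ((card X : ℝ) + 1) / 2 * ∑ x, p x y -
      (card X : ℝ) / 2 * ∑ x, |p x y - (∑ x', p x' y) / (card X : ℝ)|)
      (((card X : ℝ) + 1) / 2 * 1 - (card X : ℝ) / 2 *
        ∑' xy : X × Y, |p xy.1 xy.2 - (∑ x' : X, p x' xy.2) / (card X : ℝ)|) :=
    (hmarginal.mul_left _).sub (hdist.hasSum.sum_fst_of_fintype.mul_left _)
  have hguess : HasSum (fun y => guesswork (p · y)) (∑' y, guesswork (p · y)) :=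
    (summable_guesswork hp1.summable).hasSum
  have := hasSum_le (fun y => le_guesswork (p · y) ((∑ x', p x' y) / card X)) hlower hguess
  rw [mul_one] at this
  exact sub_le_comm.mp this

open Fintype in
/-- Pliam's inequality with classical side information: for a joint distribution
`p` on `X × Y` (`X` finite, `Y` countable),
`(|X|+1)/2 − G(X|Y) ≤ (|X|/2)·‖p_{XY} − u_X ⊗ p_Y‖₁`, where
`G(X|Y) = ∑_y min_σ ∑_k k · p(σ(k), y)`. -/
theorem pliam_inequality_side_information {X Y : Type*} [Fintype X] [Nonempty X]
    [Countable Y]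
    (p : X → Y → ℝ) (hp0 : ∀ x y, 0 ≤ p x y)
    (hp1 : HasSum (fun xy : X × Y => p xy.1 xy.2) 1) :
    ((card X : ℝ) + 1) / 2 -
        (∑' y : Y, ⨅ σ : Fin (card X) ≃ X,
          ∑ k : Fin (card X), (((k : ℕ) : ℝ) + 1) * p (σ k) y) ≤
      ((card X : ℝ) / 2) *
        ∑' xy : X × Y, |p xy.1 xy.2 - (∑ x' : X, p x' xy.2) / (card X : ℝ)| :=
  pliam_inequality_side_information_general p hp1
end

section
/- Upper bound on guesswork for the qubit trine states: the function f(\theta) = \frac{4}{3} + \frac{2}{3}(\cos^2(\theta - 2\pi/3) + \sin^2(\theta - 4\pi/3)) attains minimum value 2 - \frac{1}{\sqrt{3}} at \theta = \pi/4, and hence the guesswork for the uniform ensemble of the three trine states satisfies G(X|B) \leq 2 - \frac{1}{\sqrt{3}}. -/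
open Matrix ComplexOrder

/-- The three qubit trine states `|ψ_k⟩ = cos(2πk/3)|0⟩ + sin(2πk/3)|1⟩`, `k = 1,2,3`. -/
noncomputable def trine : Fin 3 → Fin 2 → ℂ := fun k =>
  ![((Real.cos (((k : ℕ) + 1) * (2 * Real.pi / 3)) : ℝ) : ℂ),
    ((Real.sin (((k : ℕ) + 1) * (2 * Real.pi / 3)) : ℝ) : ℂ)]

/-- The rank-one projector onto the `k`-th trine state. -/
noncomputable def trineProj (k : Fin 3) : Matrix (Fin 2) (Fin 2) ℂ :=
  Matrix.vecMulVec (trine k) (star (trine k))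

/-- The cost operator `R_g = (1/3) ∑_k N(g,k) |ψ_k⟩⟨ψ_k|` for a guessing order `g`. -/
noncomputable def trineR (g : Equiv.Perm (Fin 3)) : Matrix (Fin 2) (Fin 2) ℂ :=
  (3 : ℂ)⁻¹ • ∑ k : Fin 3, ((((g.symm k : ℕ) + 1 : ℕ) : ℂ)) • trineProj k

/-- Guesswork with quantum side information for the uniform trine ensemble. -/
noncomputable def trineGuesswork : ℝ :=
  ⨅ E : {E : Equiv.Perm (Fin 3) → Matrix (Fin 2) (Fin 2) ℂ //
      (∀ g, (E g).PosSemidef) ∧ ∑ g, E g = 1},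
    (∑ g : Equiv.Perm (Fin 3), (trineR g * E.1 g).trace).re

/-!
Measure in the orthonormal basis `|θ⟩, |θ + π/2⟩` and, on the two outcomes, guess in the orders
`(ψ₂, ψ₃, ψ₁)` and `(ψ₁, ψ₃, ψ₂)`. Since `|⟨a|b⟩|² = cos²(a - b)` for real qubit states, this
strategy costs `f(θ) = 4/3 + (2/3)(cos²(θ - 2π/3) + sin²(θ - 4π/3))`, and expanding the
trigonometric functions gives `f(θ) = 2 - sin(2θ)/√3`, minimal at `θ = π/4`. The infimum defining
the guesswork is over a set bounded below by `0`, because the trace of a product of positive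
semidefinite matrices is nonnegative.
-/

open Real

theorem Matrix.trace_vecMulVec_star_mul_nonneg {𝕜 n : Type*} [RCLike 𝕜] [Fintype n]
    {E : Matrix n n 𝕜} (hE : E.PosSemidef) (v : n → 𝕜) :
    0 ≤ (vecMulVec v (star v) * E).trace := by
  rw [vecMulVec_mul, trace_vecMulVec, dotProduct_comm, ← dotProduct_mulVec]
  exact hE.dotProduct_mulVec_nonneg v

theorem Matrix.PosSemidef.trace_mul_nonneg {𝕜 n : Type*} [RCLike 𝕜] [Fintype n]
    {A B : Matrix n n 𝕜} (hA : A.PosSemidef) (hB : B.PosSemidef) : 0 ≤ (A * B).trace := by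
  obtain ⟨m, v, rfl⟩ := posSemidef_iff_eq_sum_vecMulVec.mp hA
  rw [Finset.sum_mul, trace_sum]
  exact Finset.sum_nonneg fun i _ => trace_vecMulVec_star_mul_nonneg hB (v i)

noncomputable def qubitState (a : ℝ) : Fin 2 → ℂ := ![(cos a : ℂ), (sin a : ℂ)]

noncomputable def qubitProj (a : ℝ) : Matrix (Fin 2) (Fin 2) ℂ :=
  vecMulVec (qubitState a) (star (qubitState a))

theorem trineProj_eq_qubitProj (k : Fin 3) :
    trineProj k = qubitProj (((k : ℕ) + 1) * (2 * π / 3)) := rfl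

theorem qubitProj_posSemidef (a : ℝ) : (qubitProj a).PosSemidef :=
  posSemidef_vecMulVec_self_star _

theorem star_qubitState (a : ℝ) : star (qubitState a) = qubitState a := by
  ext i
  fin_cases i <;> simp [qubitState, -Complex.ofReal_cos, -Complex.ofReal_sin]

theorem qubitState_dotProduct_qubitState (a b : ℝ) :
    qubitState a ⬝ᵥ qubitState b = (cos (a - b) : ℂ) := by
  simp [qubitState, cos_sub, -Complex.ofReal_cos, -Complex.ofReal_sin]

theorem trace_qubitProj_mul_qubitProj (a b : ℝ) :
    (qubitProj a * qubitProj b).trace = ((cos (a - b) ^ 2 : ℝ) : ℂ) := by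
  simp only [qubitProj, star_qubitState, vecMulVec_mul_vecMulVec, trace_vecMulVec,
    dotProduct_smul, qubitState_dotProduct_qubitState, smul_eq_mul]
  push_cast
  ring

theorem qubitProj_add_qubitProj_add_pi_div_two (θ : ℝ) :
    qubitProj θ + qubitProj (θ + π / 2) = 1 := by
  have h : (sin θ : ℂ) ^ 2 + (cos θ : ℂ) ^ 2 = 1 := by exact_mod_cast sin_sq_add_cos_sq θ
  simp only [qubitProj, star_qubitState]
  ext i j
  fin_cases i <;> fin_cases j <;>
    simp [qubitState, cos_add_pi_div_two, sin_add_pi_div_two, one_apply,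
      -Complex.ofReal_cos, -Complex.ofReal_sin] <;>
    first | linear_combination h | ring

theorem trineR_posSemidef (g : Equiv.Perm (Fin 3)) : (trineR g).PosSemidef :=
  .smul (posSemidef_sum _ fun _ _ => .smul (posSemidef_vecMulVec_self_star _) (Nat.cast_nonneg _))
    (by positivity)

theorem trineGuesswork_le {E : Equiv.Perm (Fin 3) → Matrix (Fin 2) (Fin 2) ℂ}
    (hE : ∀ g, (E g).PosSemidef) (hE_sum : ∑ g, E g = 1) :
    trineGuesswork ≤ (∑ g, (trineR g * E g).trace).re := by
  refine ciInf_le ⟨0, ?_⟩ (⟨E, hE, hE_sum⟩ : {E : _ // _})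
  rintro _ ⟨F, rfl⟩
  exact (Complex.nonneg_iff.mp (Finset.sum_nonneg fun g _ =>
    (trineR_posSemidef g).trace_mul_nonneg (F.2.1 g))).1

theorem trace_trineR_mul_qubitProj (g : Equiv.Perm (Fin 3)) (θ : ℝ) :
    (trineR g * qubitProj θ).trace = ((3⁻¹ * ∑ k : Fin 3, ((g.symm k : ℕ) + 1 : ℕ) *
      cos (((k : ℕ) + 1) * (2 * π / 3) - θ) ^ 2 : ℝ) : ℂ) := by
  simp only [trineR, smul_mul_assoc, Finset.sum_mul, trace_smul, trace_sum, trineProj_eq_qubitProj,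
    trace_qubitProj_mul_qubitProj]
  push_cast [nsmul_eq_mul, smul_eq_mul]
  rfl

/-- In `trineR g` the state `ψ_k` is guessed at position `g.symm k`, so `g i` is the `i`-th guess:
`finRotate 3` is the order `(ψ₂, ψ₃, ψ₁)` and `Equiv.swap 1 2` the order `(ψ₁, ψ₃, ψ₂)`. -/
noncomputable def trineMeasurement (θ : ℝ) : Equiv.Perm (Fin 3) → Matrix (Fin 2) (Fin 2) ℂ :=
  Pi.single (finRotate 3) (qubitProj θ) + Pi.single (Equiv.swap 1 2) (qubitProj (θ + π / 2))

theorem trineMeasurement_posSemidef (θ : ℝ) (g : Equiv.Perm (Fin 3)) :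
    (trineMeasurement θ g).PosSemidef := by
  unfold trineMeasurement
  refine .add ?_ ?_ <;> rw [Pi.single_apply] <;> split_ifs
  exacts [qubitProj_posSemidef _, .zero, qubitProj_posSemidef _, .zero]

theorem sum_trineMeasurement (θ : ℝ) : ∑ g, trineMeasurement θ g = 1 := by
  simp only [trineMeasurement, Pi.add_apply, Finset.sum_add_distrib, Finset.sum_pi_single',
    Finset.mem_univ, if_true, qubitProj_add_qubitProj_add_pi_div_two]

noncomputable def trineBasisCost (θ : ℝ) : ℝ :=
  4 / 3 + (2 / 3) * (cos (θ - 2 * π / 3) ^ 2 + sin (θ - 4 * π / 3) ^ 2)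

theorem trineMeasurement_cost (θ : ℝ) :
    (∑ g, (trineR g * trineMeasurement θ g).trace).re = trineBasisCost θ := by
  have h_rot : ∀ k, ((finRotate 3).symm k : ℕ) + 1 = ![3, 1, 2] k := by decide
  have h_swap : ∀ k, ((Equiv.swap (1 : Fin 3) 2).symm k : ℕ) + 1 = ![1, 3, 2] k := by decide
  have h_cos : ∀ a, cos (a - θ) ^ 2 = cos (θ - a) ^ 2 := fun a => by
    rw [← neg_sub, cos_neg]
  have h_sin : ∀ a, cos (a - (θ + π / 2)) ^ 2 = sin (θ - a) ^ 2 := fun a => by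
    rw [show a - (θ + π / 2) = a - θ - π / 2 by ring, cos_sub_pi_div_two, ← neg_sub, sin_neg,
      neg_sq]
  simp only [trineMeasurement, Pi.add_apply, mul_add, trace_add, Finset.sum_add_distrib,
    Pi.single_apply, mul_ite, mul_zero, apply_ite trace, trace_zero, Finset.sum_ite_eq',
    Finset.mem_univ, if_true, trace_trineR_mul_qubitProj, ← Complex.ofReal_add, Complex.ofReal_re,
    h_rot, h_swap, h_cos, h_sin, Fin.sum_univ_three]
  norm_num [Matrix.cons_val_two, Matrix.vecHead, Matrix.vecTail]
  rw [show θ - 2 * (2 * π / 3) = θ - 4 * π / 3 by ring, show θ - 3 * (2 * π / 3) = θ - 2 * π by ring,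
    cos_sub_two_pi, sin_sub_two_pi, trineBasisCost]
  linear_combination (2 / 3) * sin_sq_add_cos_sq θ + (1 / 3) * sin_sq_add_cos_sq (θ - 2 * π / 3) +
    (1 / 3) * sin_sq_add_cos_sq (θ - 4 * π / 3)

theorem trineBasisCost_eq (θ : ℝ) : trineBasisCost θ = 2 - sin (2 * θ) / √3 := by
  have h3 : √3 ^ 2 = 3 := sq_sqrt (by norm_num)
  have h_cos : cos (θ - 2 * π / 3) = -cos θ / 2 + √3 / 2 * sin θ := by
    rw [show 2 * π / 3 = π - π / 3 by ring, cos_sub, cos_pi_sub, sin_pi_sub, cos_pi_div_three,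
      sin_pi_div_three]
    ring
  have h_sin : sin (θ - 4 * π / 3) = -sin θ / 2 + √3 / 2 * cos θ := by
    rw [show 4 * π / 3 = π / 3 + π by ring, sin_sub, cos_add_pi, sin_add_pi, cos_pi_div_three,
      sin_pi_div_three]
    ring
  rw [trineBasisCost, h_cos, h_sin, sin_two_mul]
  field_simp
  linear_combination (√3 + √3 ^ 3) * sin_sq_add_cos_sq θ + (√3 - 4 * cos θ * sin θ) * h3

theorem trineGuesswork_le_trineBasisCost (θ : ℝ) : trineGuesswork ≤ trineBasisCost θ :=
  trineMeasurement_cost θ ▸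
    trineGuesswork_le (trineMeasurement_posSemidef θ) (sum_trineMeasurement θ)

/-- The function `f(θ) = 4/3 + (2/3)(cos²(θ − 2π/3) + sin²(θ − 4π/3))` attains its
minimum value `2 − 1/√3` at `θ = π/4`, and hence the guesswork of the uniform trine
ensemble satisfies `G(X|B) ≤ 2 − 1/√3`. -/
theorem trine_guesswork_upper_bound :
    (4 / 3 + (2 / 3) * (Real.cos (Real.pi / 4 - 2 * Real.pi / 3) ^ 2 +
        Real.sin (Real.pi / 4 - 4 * Real.pi / 3) ^ 2)) = 2 - 1 / Real.sqrt 3 ∧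
    (∀ θ : ℝ, 2 - 1 / Real.sqrt 3 ≤
      4 / 3 + (2 / 3) * (Real.cos (θ - 2 * Real.pi / 3) ^ 2 +
        Real.sin (θ - 4 * Real.pi / 3) ^ 2)) ∧
    trineGuesswork ≤ 2 - 1 / Real.sqrt 3 := by
  have h_min : trineBasisCost (π / 4) = 2 - 1 / √3 := by
    rw [trineBasisCost_eq, show 2 * (π / 4) = π / 2 by ring, sin_pi_div_two]
  refine ⟨h_min, fun θ => ?_, h_min ▸ trineGuesswork_le_trineBasisCost (π / 4)⟩
  change _ ≤ trineBasisCost θ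
  rw [trineBasisCost_eq]
  gcongr
  exact sin_le_one _
end
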